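/- arXiv:2210.07029 — 2 statements merged into one kernel-verified Lean document; each statement's English description precedes it below -/
import Mathlib

section
/- K_ν(ρ) ~ √(π/(2ρ)) e^{-ρ} as ρ → +∞, i.e. the limit of K_ν(ρ) / (√(π/(2ρ)) e^{-ρ}) as ρ → +∞ equals 1, for every real ν. -/
open MeasureTheory Real Filter

noncomputable def besselK (ν ρ : ℝ) : ℝ :=
  (1 / 2) * (ρ / 2) ^ ν * ∫ t in Set.Ioi (0 : ℝ), Real.exp (-t - ρ ^ 2 / (4 * t)) * t ^ (-ν - 1)

open Set Topology

/-!
Substituting `t = (ρ / 2) eᵘ` gives `K_ν(ρ) = ½ ∫ exp (-ρ cosh u - ν u) du`. Rescaling `u = x / √ρ`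
(Laplace's method) gives `K_ν(ρ) = e^{-ρ} / (2 √ρ) ∫ f_ρ` with
`f_ρ(x) = exp (-ρ (cosh (x / √ρ) - 1) - ν x / √ρ)`. Since `h² / 2 ≤ cosh h - 1 ≤ h² / 2 + O(h⁴)`,
`f_ρ(x) → e^{-x² / 2}` pointwise and `f_ρ(x) ≤ e^{ν²} e^{-x² / 4}` for `ρ ≥ 1`, so by dominated
convergence `∫ f_ρ → √(2π)`, which is exactly the claimed asymptotics.
-/

theorem integral_Ioi_zero_eq_integral_exp_smul {E : Type*} [NormedAddCommGroup E]
    [NormedSpace ℝ E] (g : ℝ → E) :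
    ∫ t in Ioi 0, g t = ∫ u, exp u • g (exp u) := by
  rw [← range_exp, ← image_univ, integral_image_eq_integral_abs_deriv_smul MeasurableSet.univ
    (fun u _ ↦ (hasDerivAt_exp u).hasDerivWithinAt) exp_injective.injOn, Measure.restrict_univ]
  simp_rw [abs_of_pos (exp_pos _)]

theorem sq_div_two_le_cosh_sub_one (h : ℝ) : h ^ 2 / 2 ≤ cosh h - 1 := by
  have := sum_le_hasSum (Finset.range 2) (fun n _ ↦ by rw [pow_mul]; positivity) (hasSum_cosh h)
  norm_num [Finset.sum_range_succ] at this
  linarith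

theorem cosh_sub_one_le {h : ℝ} (hh : h ^ 2 / 2 ≤ 1) :
    cosh h - 1 ≤ h ^ 2 / 2 + (h ^ 2 / 2) ^ 2 := by
  have := abs_le.1 (abs_exp_sub_one_sub_id_le (abs_le.2 ⟨by linarith [sq_nonneg h], hh⟩))
  linarith [cosh_le_exp_half_sq h]

theorem besselK_eq_integral_exp_neg_mul_cosh (ν : ℝ) {ρ : ℝ} (hρ : 0 < ρ) :
    besselK ν ρ = 2⁻¹ * ∫ u, exp (-(ρ * cosh u) - ν * u) := by
  set c := log (ρ / 2)
  have hc : exp c = ρ / 2 := exp_log (by positivity)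
  have hsubst : ∀ u, exp (u + c) * (exp (-exp (u + c) - ρ ^ 2 / (4 * exp (u + c)))
      * exp (u + c) ^ (-ν - 1)) = (ρ / 2) ^ (-ν) * exp (-(ρ * cosh u) - ν * u) := by
    intro u
    have ht : exp (u + c) = ρ / 2 * exp u := by rw [exp_add, hc, mul_comm]
    have hcosh : ρ / 2 * exp u + ρ ^ 2 / (4 * (ρ / 2 * exp u)) = ρ * cosh u := by
      rw [cosh_eq, exp_neg]; field_simp; ring
    have hpow : (ρ / 2 * exp u) ^ (-ν - 1) = (ρ / 2) ^ (-ν) * exp (-ν * u) / (ρ / 2 * exp u) := by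
      rw [rpow_sub_one (by positivity), mul_rpow (by positivity) (exp_pos u).le, ← exp_mul,
        mul_comm u]
    rw [ht, hpow, show -(ρ / 2 * exp u) - ρ ^ 2 / (4 * (ρ / 2 * exp u)) = -(ρ * cosh u) by
      rw [← hcosh]; ring, sub_eq_add_neg _ (ν * u), exp_add, ← neg_mul]
    field_simp
  rw [besselK, integral_Ioi_zero_eq_integral_exp_smul, ← integral_add_right_eq_self _ c]
  simp only [smul_eq_mul, hsubst, integral_const_mul, ← mul_assoc]
  rw [mul_assoc (1 / 2), ← rpow_add (by positivity)]
  simp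

noncomputable def besselKScaledIntegrand (ν ρ x : ℝ) : ℝ :=
  exp (-(ρ * (cosh (x / √ρ) - 1)) - ν * (x / √ρ))

theorem besselK_eq_exp_neg_div_mul_integral (ν : ℝ) {ρ : ℝ} (hρ : 0 < ρ) :
    besselK ν ρ = exp (-ρ) / (2 * √ρ) * ∫ x, besselKScaledIntegrand ν ρ x := by
  have hsplit : ∀ u, exp (-(ρ * (cosh u - 1)) - ν * u) = exp ρ * exp (-(ρ * cosh u) - ν * u) := by
    intro u; rw [← exp_add]; ring_nf
  simp only [besselKScaledIntegrand, hsplit, integral_const_mul]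
  rw [Measure.integral_comp_div (fun u ↦ exp (-(ρ * cosh u) - ν * u)),
    abs_of_pos (sqrt_pos.2 hρ), besselK_eq_integral_exp_neg_mul_cosh ν hρ, smul_eq_mul, exp_neg]
  field_simp

theorem sq_div_two_le_mul_cosh_div_sqrt_sub_one (x : ℝ) {ρ : ℝ} (hρ : 0 < ρ) :
    x ^ 2 / 2 ≤ ρ * (cosh (x / √ρ) - 1) := by
  calc x ^ 2 / 2 = ρ * ((x / √ρ) ^ 2 / 2) := by rw [div_pow, sq_sqrt hρ.le]; field_simp
    _ ≤ ρ * (cosh (x / √ρ) - 1) :=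
      mul_le_mul_of_nonneg_left (sq_div_two_le_cosh_sub_one _) hρ.le

theorem mul_cosh_div_sqrt_sub_one_le (x : ℝ) {ρ : ℝ} (hρ : x ^ 2 / 2 ≤ ρ) (hρ₀ : 0 < ρ) :
    ρ * (cosh (x / √ρ) - 1) ≤ x ^ 2 / 2 + (x ^ 2 / 2) ^ 2 / ρ := by
  have hsq : (x / √ρ) ^ 2 = x ^ 2 / ρ := by rw [div_pow, sq_sqrt hρ₀.le]
  have hsmall : (x / √ρ) ^ 2 / 2 ≤ 1 := by
    rw [hsq, div_div, div_le_one (by positivity)]; linarith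
  have := mul_le_mul_of_nonneg_left (cosh_sub_one_le hsmall) hρ₀.le
  rw [hsq] at this
  field_simp at this ⊢
  linarith

theorem tendsto_mul_cosh_div_sqrt_sub_one (x : ℝ) :
    Tendsto (fun ρ : ℝ ↦ ρ * (cosh (x / √ρ) - 1)) atTop (𝓝 (x ^ 2 / 2)) := by
  have hupper : Tendsto (fun ρ : ℝ ↦ x ^ 2 / 2 + (x ^ 2 / 2) ^ 2 / ρ) atTop (𝓝 (x ^ 2 / 2)) := by
    simpa using tendsto_const_nhds.add (tendsto_const_nhds.div_atTop (tendsto_id (α := ℝ)))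
  refine tendsto_of_tendsto_of_tendsto_of_le_of_le' tendsto_const_nhds hupper ?_ ?_
  · filter_upwards [eventually_gt_atTop 0] with ρ hρ
    exact sq_div_two_le_mul_cosh_div_sqrt_sub_one x hρ
  · filter_upwards [eventually_gt_atTop 0, eventually_ge_atTop (x ^ 2 / 2)] with ρ hρ₀ hρ
    exact mul_cosh_div_sqrt_sub_one_le x hρ hρ₀

theorem tendsto_besselKScaledIntegrand (ν x : ℝ) :
    Tendsto (fun ρ ↦ besselKScaledIntegrand ν ρ x) atTop (𝓝 (exp (-(1 / 2) * x ^ 2))) := by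
  have hdrift : Tendsto (fun ρ : ℝ ↦ ν * (x / √ρ)) atTop (𝓝 0) := by
    simpa using (tendsto_const_nhds.div_atTop tendsto_sqrt_atTop).const_mul ν
  have := ((tendsto_mul_cosh_div_sqrt_sub_one x).neg.sub hdrift).rexp
  simpa [besselKScaledIntegrand, neg_div, div_eq_inv_mul] using this

theorem besselKScaledIntegrand_le (ν x : ℝ) {ρ : ℝ} (hρ : 1 ≤ ρ) :
    besselKScaledIntegrand ν ρ x ≤ exp (ν ^ 2) * exp (-(1 / 4) * x ^ 2) := by
  have hρ₀ : 0 < ρ := one_pos.trans_le hρ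
  have hdrift : -(ν * (x / √ρ)) ≤ |ν| * |x| := by
    calc -(ν * (x / √ρ)) ≤ |ν * (x / √ρ)| := neg_le_abs _
      _ = |ν * x| / √ρ := by rw [mul_div_assoc', abs_div, abs_of_pos (sqrt_pos.2 hρ₀)]
      _ ≤ |ν| * |x| := by
          rw [← abs_mul]; exact div_le_self (abs_nonneg _) (one_le_sqrt.2 hρ)
  rw [besselKScaledIntegrand, ← exp_add, exp_le_exp]
  nlinarith [sq_div_two_le_mul_cosh_div_sqrt_sub_one x hρ₀, sq_nonneg (|ν| - |x| / 2), sq_abs x,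
    sq_abs ν]

theorem tendsto_integral_besselKScaledIntegrand (ν : ℝ) :
    Tendsto (fun ρ ↦ ∫ x, besselKScaledIntegrand ν ρ x) atTop (𝓝 √(2 * π)) := by
  have hgauss : ∫ x : ℝ, exp (-(1 / 2) * x ^ 2) = √(2 * π) := by
    rw [integral_gaussian]; norm_num [div_div_eq_mul_div, mul_comm]
  rw [← hgauss]
  refine tendsto_integral_filter_of_dominated_convergence
    (fun x ↦ exp (ν ^ 2) * exp (-(1 / 4) * x ^ 2)) ?_ ?_
    ((integrable_exp_neg_mul_sq (by norm_num : (0 : ℝ) < 1 / 4)).const_mul _)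
    (.of_forall (tendsto_besselKScaledIntegrand ν))
  · exact .of_forall fun ρ ↦ by unfold besselKScaledIntegrand; fun_prop
  · filter_upwards [eventually_ge_atTop 1] with ρ hρ
    exact .of_forall fun x ↦
      (norm_of_nonneg (exp_pos _).le).trans_le (besselKScaledIntegrand_le ν x hρ)

theorem stmt_5 (ν : ℝ) :
    Tendsto (fun ρ => besselK ν ρ / (Real.sqrt (Real.pi / (2 * ρ)) * Real.exp (-ρ)))
      atTop (nhds 1) := by
  have hratio : ∀ᶠ ρ in atTop, (∫ x, besselKScaledIntegrand ν ρ x) / √(2 * π) =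
      besselK ν ρ / (√(π / (2 * ρ)) * exp (-ρ)) := by
    filter_upwards [eventually_gt_atTop 0] with ρ hρ
    have hsqrt : √(π / (2 * ρ)) = √(2 * π) / (2 * √ρ) := by
      rw [eq_div_iff (by positivity), ← sqrt_sq zero_le_two, ← sqrt_mul' _ hρ.le,
        ← sqrt_mul (by positivity)]
      congr 1
      field_simp
      ring
    rw [besselK_eq_exp_neg_div_mul_integral ν hρ, hsqrt]
    field_simp
  have hlim := (tendsto_integral_besselKScaledIntegrand ν).div_const √(2 * π)
  rw [div_self (sqrt_pos.2 two_pi_pos).ne'] at hlim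
  exact hlim.congr' hratio
end

section
/- For every ρ > 0, ∫_ρ^∞ (cosh r − cosh ρ)^{-1/2} dr ≤ (Γ(1/4)/Γ(3/4)) · √(π / sinh ρ). -/
/-!
For `r ≥ ρ ≥ 0`, `cosh r - cosh ρ = 2 sinh ((r + ρ) / 2) sinh ((r - ρ) / 2)` is at least
`2 sinh ρ sinh ((r - ρ) / 2)`, so after the shift `r ↦ r - ρ` the integral is at most
`(2 sinh ρ)^(-1/2) ∫₀^∞ sinh (x / 2)^(-1/2) dx`. The substitution `t = e^(-x)` turns
`∫₀^∞ sinh (x / 2)^(-s) dx` into `2^s B(s / 2, 1 - s)`; for `s = 1/2` this is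
`√2 Γ(1/4) Γ(1/2) / Γ(3/4)`, and `Γ(1/2) = √π`.
-/

open MeasureTheory Real Set

section Beta

variable {a b : ℝ}

lemma ofReal_rpow_mul_one_sub_rpow {t : ℝ} (ht : t ∈ Icc 0 1) :
    ((t ^ (a - 1) * (1 - t) ^ (b - 1) : ℝ) : ℂ) =
      (t : ℂ) ^ ((a : ℂ) - 1) * (1 - (t : ℂ)) ^ ((b : ℂ) - 1) := by
  push_cast [Complex.ofReal_cpow ht.1, Complex.ofReal_cpow (sub_nonneg.2 ht.2)]
  rfl

theorem integrableOn_rpow_mul_one_sub_rpow (ha : 0 < a) (hb : 0 < b) :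
    IntegrableOn (fun t : ℝ ↦ t ^ (a - 1) * (1 - t) ^ (b - 1)) (Ioo 0 1) := by
  have h := (Complex.betaIntegral_convergent (u := a) (v := b) (by simpa) (by simpa)).def'
  rw [uIoc_of_le zero_le_one] at h
  refine (IntegrableOn.mono_set h.re Ioo_subset_Ioc_self).congr_fun (fun t ht ↦ ?_)
    measurableSet_Ioo
  dsimp only
  rw [RCLike.re_to_complex, ← ofReal_rpow_mul_one_sub_rpow (Ioo_subset_Icc_self ht),
    Complex.ofReal_re]

theorem integral_rpow_mul_one_sub_rpow (ha : 0 < a) (hb : 0 < b) :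
    ∫ t in Ioo 0 1, t ^ (a - 1) * (1 - t) ^ (b - 1) = Gamma a * Gamma b / Gamma (a + b) := by
  apply Complex.ofReal_injective
  rw [← integral_complex_ofReal, ← integral_Ioc_eq_integral_Ioo,
    setIntegral_congr_fun measurableSet_Ioc
      (fun t ht ↦ ofReal_rpow_mul_one_sub_rpow (Ioc_subset_Icc_self ht)),
    ← intervalIntegral.integral_of_le zero_le_one, ← Complex.betaIntegral,
    Complex.betaIntegral_eq_Gamma_mul_div _ _ (by simpa) (by simpa)]
  push_cast [← Complex.Gamma_ofReal]
  rfl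

end Beta

section ExpNegSubstitution

variable {E : Type*} [NormedAddCommGroup E] [NormedSpace ℝ E]

lemma image_exp_neg_Ioi_zero : (fun x : ℝ ↦ exp (-x)) '' Ioi 0 = Ioo 0 1 := by
  have : (fun x : ℝ ↦ exp (-x)) = exp ∘ Neg.neg := rfl
  rw [this, image_comp, image_neg_Ioi, neg_zero, image_exp_Iio, exp_zero]

lemma hasDerivWithinAt_exp_neg (s : Set ℝ) (x : ℝ) :
    HasDerivWithinAt (fun x ↦ exp (-x)) (-exp (-x)) s x := by
  simpa using ((hasDerivAt_neg x).exp).hasDerivWithinAt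

lemma injOn_exp_neg (s : Set ℝ) : InjOn (fun x : ℝ ↦ exp (-x)) s :=
  fun _ _ _ _ h ↦ neg_injective (exp_injective h)

theorem integral_comp_exp_neg_Ioi_zero (g : ℝ → E) :
    ∫ x in Ioi 0, exp (-x) • g (exp (-x)) = ∫ t in Ioo 0 1, g t := by
  rw [← image_exp_neg_Ioi_zero, integral_image_eq_integral_abs_deriv_smul measurableSet_Ioi
    (fun x _ ↦ hasDerivWithinAt_exp_neg _ x) (injOn_exp_neg _)]
  simp [abs_of_pos (exp_pos _)]

theorem integrableOn_comp_exp_neg_Ioi_zero_iff (g : ℝ → E) :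
    IntegrableOn (fun x ↦ exp (-x) • g (exp (-x))) (Ioi 0) ↔ IntegrableOn g (Ioo 0 1) := by
  rw [← image_exp_neg_Ioi_zero, integrableOn_image_iff_integrableOn_abs_deriv_smul
    measurableSet_Ioi (fun x _ ↦ hasDerivWithinAt_exp_neg _ x) (injOn_exp_neg _)]
  simp [abs_of_pos (exp_pos _)]

end ExpNegSubstitution

section SinhHalf

variable {s : ℝ}

lemma sinh_half_rpow_neg_eq {x : ℝ} (hx : 0 < x) :
    sinh (x / 2) ^ (-s) =
      2 ^ s * (exp (-x) * (exp (-x) ^ (s / 2 - 1) * (1 - exp (-x)) ^ (-s))) := by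
  have h1 : 0 < 1 - exp (-x) := sub_pos.2 (exp_lt_one_iff.2 (neg_lt_zero.2 hx))
  have hsinh : sinh (x / 2) = exp (x / 2) * (1 - exp (-x)) / 2 := by
    rw [sinh_eq, mul_sub, mul_one, ← exp_add]
    ring_nf
  have hexp : exp (x / 2 * -s) = exp (-x) * exp (-x) ^ (s / 2 - 1) := by
    rw [← exp_mul, ← exp_add]
    ring_nf
  rw [hsinh, div_rpow (by positivity) zero_le_two, mul_rpow (exp_pos _).le h1.le, ← exp_mul,
    hexp, rpow_neg zero_le_two, div_inv_eq_mul]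
  ring

theorem integrableOn_sinh_half_rpow_neg (hs0 : 0 < s) (hs1 : s < 1) :
    IntegrableOn (fun x ↦ sinh (x / 2) ^ (-s)) (Ioi 0) := by
  have hbeta := integrableOn_rpow_mul_one_sub_rpow (half_pos hs0) (sub_pos.2 hs1)
  rw [← integrableOn_comp_exp_neg_Ioi_zero_iff] at hbeta
  refine IntegrableOn.congr_fun (hbeta.const_mul (2 ^ s)) (fun x hx ↦ ?_) measurableSet_Ioi
  rw [sinh_half_rpow_neg_eq hx, smul_eq_mul, sub_sub_cancel_left]

theorem integral_sinh_half_rpow_neg (hs0 : 0 < s) (hs1 : s < 1) :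
    ∫ x in Ioi 0, sinh (x / 2) ^ (-s) =
      2 ^ s * (Gamma (s / 2) * Gamma (1 - s) / Gamma (1 - s / 2)) := by
  rw [setIntegral_congr_fun measurableSet_Ioi (fun x hx ↦ sinh_half_rpow_neg_eq hx),
    integral_const_mul]
  have := integral_comp_exp_neg_Ioi_zero (fun t ↦ t ^ (s / 2 - 1) * (1 - t) ^ (1 - s - 1))
  simp only [sub_sub_cancel_left, smul_eq_mul] at this
  rw [this, ← sub_sub_cancel_left 1 s,
    integral_rpow_mul_one_sub_rpow (half_pos hs0) (sub_pos.2 hs1)]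
  ring_nf

end SinhHalf

section ShiftIoi

variable {E : Type*} [NormedAddCommGroup E]

theorem integral_Ioi_comp_sub [NormedSpace ℝ E] (f : ℝ → E) (a b : ℝ) :
    ∫ x in Ioi a, f (x - b) = ∫ x in Ioi (a - b), f x := by
  have := (measurePreserving_sub_right volume b).setIntegral_preimage_emb
    (measurableEmbedding_subRight b) f (Ioi (a - b))
  rwa [preimage_sub_const_Ioi, sub_add_cancel] at this

theorem integrableOn_Ioi_comp_sub_iff (f : ℝ → E) (a b : ℝ) :
    IntegrableOn (fun x ↦ f (x - b)) (Ioi a) ↔ IntegrableOn f (Ioi (a - b)) := by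
  have := (measurePreserving_sub_right volume b).integrableOn_comp_preimage
    (measurableEmbedding_subRight b) (f := f) (s := Ioi (a - b))
  rwa [preimage_sub_const_Ioi, sub_add_cancel] at this

end ShiftIoi

lemma cosh_sub_cosh (x y : ℝ) :
    cosh x - cosh y = 2 * sinh ((x + y) / 2) * sinh ((x - y) / 2) := by
  obtain ⟨u, v, rfl, rfl⟩ : ∃ u v, x = u + v ∧ y = u - v :=
    ⟨(x + y) / 2, (x - y) / 2, by ring, by ring⟩
  rw [show (u + v + (u - v)) / 2 = u by ring, show (u + v - (u - v)) / 2 = v by ring,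
    cosh_add, cosh_sub]
  ring

lemma two_mul_sinh_mul_sinh_le_cosh_sub_cosh {x y : ℝ} (hyx : y ≤ x) :
    2 * sinh y * sinh ((x - y) / 2) ≤ cosh x - cosh y := by
  have hsinh_le : sinh y ≤ sinh ((x + y) / 2) := sinh_le_sinh.2 (by linarith)
  have hsinh_nonneg : 0 ≤ sinh ((x - y) / 2) := sinh_nonneg_iff.2 (by linarith)
  rw [cosh_sub_cosh]
  exact mul_le_mul_of_nonneg_right (by linarith) hsinh_nonneg

lemma cosh_sub_cosh_rpow_neg_le {x y s : ℝ} (hy : 0 < y) (hyx : y < x) (hs : 0 ≤ s) :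
    (cosh x - cosh y) ^ (-s) ≤ (2 * sinh y) ^ (-s) * sinh ((x - y) / 2) ^ (-s) := by
  have hsinh_y : 0 < sinh y := sinh_pos_iff.2 hy
  have hsinh_xy : 0 < sinh ((x - y) / 2) := sinh_pos_iff.2 (by linarith)
  rw [← mul_rpow (by positivity) hsinh_xy.le]
  exact rpow_le_rpow_of_nonpos (by positivity)
    (two_mul_sinh_mul_sinh_le_cosh_sub_cosh hyx.le) (neg_nonpos.2 hs)

theorem stmt_7 (ρ : ℝ) (hρ : 0 < ρ) :
    (∫ r in Set.Ioi ρ, (Real.cosh r - Real.cosh ρ) ^ (-(1 / 2) : ℝ))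
      ≤ (Real.Gamma (1 / 4) / Real.Gamma (3 / 4)) * Real.sqrt (Real.pi / Real.sinh ρ) := by
  have hsinh : 0 < sinh ρ := sinh_pos_iff.2 hρ
  have hmajorant : IntegrableOn (fun r ↦ sinh ((r - ρ) / 2) ^ (-(1 / 2) : ℝ)) (Ioi ρ) := by
    rw [integrableOn_Ioi_comp_sub_iff (fun x ↦ sinh (x / 2) ^ (-(1 / 2) : ℝ)), sub_self]
    exact integrableOn_sinh_half_rpow_neg (by norm_num) (by norm_num)
  calc (∫ r in Ioi ρ, (cosh r - cosh ρ) ^ (-(1 / 2) : ℝ))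
      ≤ ∫ r in Ioi ρ, (2 * sinh ρ) ^ (-(1 / 2) : ℝ) * sinh ((r - ρ) / 2) ^ (-(1 / 2) : ℝ) := by
        refine integral_mono_of_nonneg
          (ae_restrict_of_forall_mem measurableSet_Ioi fun r hr ↦ ?_) (hmajorant.const_mul _)
          (ae_restrict_of_forall_mem measurableSet_Ioi fun r hr ↦ ?_)
        · exact rpow_nonneg (sub_nonneg.2 (cosh_le_cosh.2 (by grind))) _
        · exact cosh_sub_cosh_rpow_neg_le hρ hr (by norm_num)
    _ = (2 * sinh ρ) ^ (-(1 / 2) : ℝ) *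
          (2 ^ (1 / 2 : ℝ) * (Gamma (1 / 4) * Gamma (1 / 2) / Gamma (3 / 4))) := by
        rw [integral_const_mul, integral_Ioi_comp_sub (fun x ↦ sinh (x / 2) ^ (-(1 / 2) : ℝ)),
          sub_self, integral_sinh_half_rpow_neg (by norm_num) (by norm_num)]
        norm_num
    _ = Gamma (1 / 4) / Gamma (3 / 4) * √(π / sinh ρ) := by
        rw [Gamma_one_half_eq, rpow_neg (by positivity), ← sqrt_eq_rpow, ← sqrt_eq_rpow,
          sqrt_mul zero_le_two, sqrt_div pi_pos.le]
        field_simp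
end
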